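/- arXiv:0904.2644 — 3 statements merged into one kernel-verified Lean document; each statement's English description precedes it below -/
import Mathlib

section
/- Let f, w be functions of real variables (x,t), and let hat, bar, underline denote the shifts x ↦ x+δ, x ↦ x+γ, x ↦ x−γ respectively. Suppose τ(x,t) is a nowhere-vanishing smooth function satisfying the Hirota bilinear equation (∂_t τ̂)·τ − τ̂·(∂_t τ) = ε·τ̂_underline·τ̄ − η₀·τ̂·τ, where ε, η₀ are constants and τ̂ = τ(x+δ,t), τ̄ = τ(x+γ,t), τ̂_underline = τ(x+δ−γ,t). Then w := −(∂_t τ)/τ satisfies the difference-differential equation ∂_t(w − ŵ + η₀) = (w − ŵ + η₀)·(w − w̄ − ŵ_underline + ŵ), where ŵ = w(x+δ,t), w̄ = w(x+γ,t), ŵ_underline = w(x+δ−γ,t). -/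
open Complex

/-- `w := -(∂_t τ)/τ` built from the tau function. -/
noncomputable def wOf (τ : ℝ → ℝ → ℂ) : ℝ → ℝ → ℂ :=
  fun x t => -(deriv (τ x) t) / τ x t

private lemma quot_aux (ε a b c d a' b' c' d' : ℂ)
    (ha : a ≠ 0) (hb : b ≠ 0) (hc : c ≠ 0) (hd : d ≠ 0) :
    ((ε * d' * c + ε * d * c') * (a * b) - ε * d * c * (a' * b + a * b')) / (a * b) ^ 2
      = ε * d * c / (a * b) * (-a' / a - -c' / c - -d' / d + -b' / b) := by
  rw [div_sub_div _ _ ha hc, div_sub_div _ _ (mul_ne_zero ha hc) hd,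
    div_add_div _ _ (mul_ne_zero (mul_ne_zero ha hc) hd) hb, div_mul_div_comm,
    div_eq_div_iff (pow_ne_zero 2 (mul_ne_zero ha hb))
      (mul_ne_zero (mul_ne_zero ha hb) (mul_ne_zero (mul_ne_zero (mul_ne_zero ha hc) hd) hb))]
  ring

theorem stmt0 (δ γ : ℝ) (ε η₀ : ℂ) (τ : ℝ → ℝ → ℂ)
    (hsmooth : ∀ x, ContDiff ℝ (⊤ : ℕ∞) (τ x))
    (hne : ∀ x t, τ x t ≠ 0)
    (hbil : ∀ x t,
      deriv (τ (x + δ)) t * τ x t - τ (x + δ) t * deriv (τ x) t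
        = ε * τ (x + δ - γ) t * τ (x + γ) t - η₀ * τ (x + δ) t * τ x t) :
    ∀ x t,
      deriv (fun s => wOf τ x s - wOf τ (x + δ) s + η₀) t
        = (wOf τ x t - wOf τ (x + δ) t + η₀) *
            (wOf τ x t - wOf τ (x + γ) t - wOf τ (x + δ - γ) t + wOf τ (x + δ) t) := by
  intro x t
  have hdiff : ∀ y s, DifferentiableAt ℝ (τ y) s :=
    fun y s => ((hsmooth y).differentiable (by simp)).differentiableAt
  -- rewrite the function inside the derivative
  have key : (fun s => wOf τ x s - wOf τ (x + δ) s + η₀)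
      = fun s => ε * τ (x + δ - γ) s * τ (x + γ) s / (τ x s * τ (x + δ) s) := by
    funext s
    have h := hbil x s
    have ha := hne x s; have hb := hne (x + δ) s
    simp only [wOf]
    field_simp
    linear_combination h
  rw [key]
  have hnum : HasDerivAt (fun s => ε * τ (x + δ - γ) s * τ (x + γ) s)
      (ε * deriv (τ (x + δ - γ)) t * τ (x + γ) t + ε * τ (x + δ - γ) t * deriv (τ (x + γ)) t) t := by
    have := (((hdiff (x + δ - γ) t).hasDerivAt.const_mul ε).mul (hdiff (x + γ) t).hasDerivAt)
    exact this
  have hden : HasDerivAt (fun s => τ x s * τ (x + δ) s)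
      (deriv (τ x) t * τ (x + δ) t + τ x t * deriv (τ (x + δ)) t) t :=
    (hdiff x t).hasDerivAt.mul (hdiff (x + δ) t).hasDerivAt
  have hdne : τ x t * τ (x + δ) t ≠ 0 := mul_ne_zero (hne x t) (hne (x + δ) t)
  have hder : deriv (fun s => ε * τ (x + δ - γ) s * τ (x + γ) s / (τ x s * τ (x + δ) s)) t = _ :=
    (hnum.div hden hdne).deriv
  rw [hder]
  have hw : wOf τ x t - wOf τ (x + δ) t + η₀ = ε * τ (x + δ - γ) t * τ (x + γ) t / (τ x t * τ (x + δ) t) := congrFun key t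
  rw [hw]
  simp only [wOf]
  have ha := hne x t; have hb := hne (x + δ) t; have hc := hne (x + γ) t
  have hd := hne (x + δ - γ) t
  generalize τ x t = a at *
  generalize τ (x + δ) t = b at *
  generalize τ (x + γ) t = c at *
  generalize τ (x + δ - γ) t = d at *
  generalize deriv (τ x) t = a'
  generalize deriv (τ (x + δ)) t = b'
  generalize deriv (τ (x + γ)) t = c'
  generalize deriv (τ (x + δ - γ)) t = d'
  exact quot_aux ε a b c d a' b' c' d' ha hb hc hd
end

section
/- With W = 1 + w₁S^{−1} + w₂S^{−2} + ⋯ a formal difference operator and res the coefficient of S⁰, one has res(W S² W^{−1}) = (1−S)(w₂ + Sw₂ − w₁·Sw₁), where S is the shift automorphism and products are pointwise products of functions. -/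
/-!
Write `W⁻¹ = Σ vₖ S⁻ᵏ`. Comparing the coefficients of `S⁻¹` and `S⁻²` in `W W⁻¹ = 1` gives
`v₁ = -w₁` and `v₂ = w₁·S⁻¹w₁ - w₂`. Substituting into `res (W S² W⁻¹) = S²v₂ + w₁·Sv₁ + w₂`
and using that each `Sʲ` is a ring endomorphism with `Sⁱ Sʲ = Sⁱ⁺ʲ`, both sides become
`w₂ - S²w₂ - w₁·Sw₁ + Sw₁·S²w₁`.
-/

open Finset

/-- The shift operator `S^j`: `(Sh γ j f)(x) = f(x + jγ)`. -/
def Sh (γ : ℝ) (j : ℤ) (f : ℝ → ℂ) : ℝ → ℂ := fun x => f (x + j * γ)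

section Shift

variable (γ : ℝ)

@[simp]
lemma Sh_zero (f : ℝ → ℂ) : Sh γ 0 f = f := by
  funext x; simp [Sh]

@[simp]
lemma Sh_one (j : ℤ) : Sh γ j 1 = 1 := rfl

lemma Sh_add (j : ℤ) (f g : ℝ → ℂ) : Sh γ j (f + g) = Sh γ j f + Sh γ j g := rfl

lemma Sh_sub (j : ℤ) (f g : ℝ → ℂ) : Sh γ j (f - g) = Sh γ j f - Sh γ j g := rfl

lemma Sh_neg (j : ℤ) (f : ℝ → ℂ) : Sh γ j (-f) = -Sh γ j f := rfl

lemma Sh_mul (j : ℤ) (f g : ℝ → ℂ) : Sh γ j (f * g) = Sh γ j f * Sh γ j g := rfl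

lemma Sh_Sh (i j : ℤ) (f : ℝ → ℂ) : Sh γ i (Sh γ j f) = Sh γ (j + i) f := by
  funext x; simp only [Sh]; push_cast; ring_nf

end Shift

section FormalInverse

variable {γ : ℝ} {w v : ℕ → ℝ → ℂ}

lemma inverse_coeff_one (hw0 : w 0 = 1) (hv0 : v 0 = 1)
    (hinv : ∀ l : ℕ, 1 ≤ l →
      ∑ i ∈ range (l + 1), w i * Sh γ (-(i : ℤ)) (v (l - i)) = 0) :
    v 1 = -w 1 := by
  have h1 := hinv 1 le_rfl
  simp only [sum_range_succ, sum_range_zero, zero_add, hw0, hv0, one_mul, mul_one,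
    Nat.cast_zero, neg_zero, Sh_zero, Sh_one] at h1
  linear_combination h1

lemma inverse_coeff_two (hw0 : w 0 = 1) (hv0 : v 0 = 1)
    (hinv : ∀ l : ℕ, 1 ≤ l →
      ∑ i ∈ range (l + 1), w i * Sh γ (-(i : ℤ)) (v (l - i)) = 0) :
    v 2 = w 1 * Sh γ (-1) (w 1) - w 2 := by
  have h2 := hinv 2 one_le_two
  simp only [sum_range_succ, sum_range_zero, zero_add, hw0, hv0, one_mul, mul_one,
    Nat.cast_zero, Nat.cast_one, Nat.cast_ofNat, neg_zero, Sh_zero, Sh_one,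
    Nat.reduceSub, inverse_coeff_one hw0 hv0 hinv, Sh_neg] at h2
  linear_combination h2

end FormalInverse

theorem stmt9 (γ : ℝ) (w v : ℕ → ℝ → ℂ)
    (hw0 : w 0 = 1) (hv0 : v 0 = 1)
    (hinv : ∀ l : ℕ, 1 ≤ l →
      ∑ i ∈ Finset.range (l + 1), w i * Sh γ (-(i : ℤ)) (v (l - i)) = 0) :
    ∑ i ∈ Finset.range 3, w i * Sh γ ((2 : ℤ) - (i : ℤ)) (v (2 - i))
      = (w 2 + Sh γ 1 (w 2) - w 1 * Sh γ 1 (w 1))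
        - Sh γ 1 (w 2 + Sh γ 1 (w 2) - w 1 * Sh γ 1 (w 1)) := by
  simp only [sum_range_succ, sum_range_zero, zero_add, Nat.cast_zero, Nat.cast_one,
    Nat.cast_ofNat, sub_zero, Nat.reduceSub, sub_self, hw0, hv0,
    inverse_coeff_one hw0 hv0 hinv, inverse_coeff_two hw0 hv0 hinv,
    Sh_add, Sh_sub, Sh_mul, Sh_neg, Sh_Sh, Sh_one, one_mul, mul_one, Int.reduceAdd,
    Int.reduceSub]
  ring
end

section
/- Suppose w₁, w₂, ... are functions, κ₁, κ₂ constants, η = w₁ − ŵ₁ + κ₁ (where ŵ = w(x+δ)), and the k=2 relation η·(ŵ₁ applied shift by δ−γ, i.e., w₁(x+δ−γ)) = w₂ − ŵ₂ + κ₁w₁ + κ₂ holds. Working with finitely supported Fourier expansions w_k(x) = Σ_n w_{k,−n}e^{2πinx}, η(x) = Σ_n η_{−n}e^{2πinx}, p = e^{2πiδ}, q = e^{2πiγ}, p^n ≠ 1 for n ≠ 0: the zero Fourier mode of the k=2 relation yields κ₂ = Σ_{l≠0} (p^l q^{−l}/(1−p^l))·η_l·η_{−l}, given that w_{1,−n}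 = η_{−n}/(1−p^n) for n ≠ 0 and κ₁ = η₀. -/
/-!
On the group algebra `ℂ[ℤ]` of coefficients, `trigPoly · x` is the algebra homomorphism induced by
the character `n ↦ e^{2πinx}`, and translating the variable by `α` multiplies the `n`-th
coefficient by `e^{2πinα}`. By Dedekind's independence of characters a trigonometric polynomial
determines its coefficients, so the relation holds in `ℂ[ℤ]`; its zero coefficient reads
`∑ₘ η₋ₘ w₁,ₘ e^{2πim(δ-γ)} = κ₁ w₁,₀ + κ₂`. The term `m = 0` is `κ₁ w₁,₀`, and for `m ≠ 0`
substituting `w₁,ₘ = ηₘ / (1 - pᵐ)` gives the claimed summand; since `pᵐ ≠ 1`, the coefficients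
`w₁,ₘ` and `ηₘ` vanish together, so both sums run over the same indices.
-/

open Complex Finset

/-- The trigonometric polynomial with (finitely supported) Fourier coefficients `a`. -/
noncomputable def trigPoly (a : ℤ →₀ ℂ) (x : ℂ) : ℂ :=
  ∑ n ∈ a.support, a n * Complex.exp (2 * (Real.pi : ℂ) * I * n * x)

noncomputable def fourierMode (n : ℤ) (x : ℂ) : ℂ :=
  Complex.exp (2 * (Real.pi : ℂ) * I * n * x)

lemma fourierMode_eq_zpow (n : ℤ) (x : ℂ) :
    fourierMode n x = Complex.exp (2 * (Real.pi : ℂ) * I * x) ^ n := by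
  rw [fourierMode, ← Complex.exp_int_mul]
  ring_nf

lemma fourierMode_add_left (n m : ℤ) (x : ℂ) :
    fourierMode (n + m) x = fourierMode n x * fourierMode m x := by
  simp only [fourierMode_eq_zpow, zpow_add₀ (Complex.exp_ne_zero _)]

lemma fourierMode_add_right (n : ℤ) (x y : ℂ) :
    fourierMode n (x + y) = fourierMode n x * fourierMode n y := by
  rw [fourierMode, fourierMode, fourierMode, ← Complex.exp_add]
  ring_nf

lemma fourierMode_zero_left (x : ℂ) : fourierMode 0 x = 1 := by
  simp [fourierMode]

lemma fourierMode_zero_right (n : ℤ) : fourierMode n 0 = 1 := by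
  simp [fourierMode]

noncomputable def modeChar (n : ℤ) : Multiplicative ℂ →* ℂ where
  toFun x := fourierMode n x.toAdd
  map_one' := fourierMode_zero_right n
  map_mul' x y := fourierMode_add_right n x.toAdd y.toAdd

noncomputable def evalChar (x : ℂ) : Multiplicative ℤ →* ℂ where
  toFun n := fourierMode n.toAdd x
  map_one' := fourierMode_zero_left x
  map_mul' n m := fourierMode_add_left n.toAdd m.toAdd x

lemma modeChar_injective : Function.Injective modeChar := by
  intro n m h
  -- at a point `x` with `e^{2πix} = 2` the two characters read `2 ^ n` and `2 ^ m`
  set x : ℂ := Complex.log 2 / (2 * (Real.pi : ℂ) * I)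
  have hx : Complex.exp (2 * (Real.pi : ℂ) * I * x) = 2 := by
    have : (2 * (Real.pi : ℂ) * I) ≠ 0 := by simp [Real.pi_ne_zero]
    rw [mul_div_cancel₀ _ this, Complex.exp_log two_ne_zero]
  have h2 : (((2 : ℝ) ^ n : ℝ) : ℂ) = (((2 : ℝ) ^ m : ℝ) : ℂ) := by
    have := DFunLike.congr_fun h (Multiplicative.ofAdd x)
    simp only [modeChar, MonoidHom.coe_mk, OneHom.coe_mk, toAdd_ofAdd, fourierMode_eq_zpow,
      hx] at this
    push_cast
    exact this
  exact zpow_right_injective₀ (a := (2 : ℝ)) (by norm_num) (by norm_num)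
    (Complex.ofReal_injective h2)

lemma trigPoly_injective : Function.Injective trigPoly := by
  intro a b hab
  have hli : LinearIndependent ℂ (fun n : ℤ => (modeChar n : Multiplicative ℂ → ℂ)) :=
    (linearIndependent_monoidHom (Multiplicative ℂ) ℂ).comp modeChar modeChar_injective
  have hlc : ∀ c : ℤ →₀ ℂ, Finsupp.linearCombination ℂ (fun n => (modeChar n : _ → ℂ)) c
      = fun x => trigPoly c x.toAdd := fun c => by
    funext x
    simp [Finsupp.linearCombination_apply, Finsupp.sum, trigPoly, modeChar, fourierMode]
  exact hli (by rw [hlc, hlc, hab])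

noncomputable def evalAt (x : ℂ) : AddMonoidAlgebra ℂ ℤ →ₐ[ℂ] ℂ :=
  AddMonoidAlgebra.lift ℂ ℂ ℤ (evalChar x)

lemma evalAt_apply (x : ℂ) (f : AddMonoidAlgebra ℂ ℤ) :
    evalAt x f = trigPoly f.coeff x := by
  simp [evalAt, AddMonoidAlgebra.lift_apply, Finsupp.sum, trigPoly, evalChar, fourierMode]

noncomputable def translateCoeff (α : ℂ) (a : ℤ →₀ ℂ) : ℤ →₀ ℂ where
  support := a.support
  toFun n := a n * fourierMode n α
  mem_support_toFun n := by simp [fourierMode]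

@[simp]
lemma translateCoeff_apply (α : ℂ) (a : ℤ →₀ ℂ) (n : ℤ) :
    translateCoeff α a n = a n * fourierMode n α := rfl

@[simp]
lemma support_translateCoeff (α : ℂ) (a : ℤ →₀ ℂ) :
    (translateCoeff α a).support = a.support := rfl

lemma trigPoly_translateCoeff (α : ℂ) (a : ℤ →₀ ℂ) (x : ℂ) :
    trigPoly (translateCoeff α a) x = trigPoly a (x + α) := by
  refine Finset.sum_congr rfl fun n _ => ?_
  change a n * fourierMode n α * fourierMode n x = a n * fourierMode n (x + α)
  rw [fourierMode_add_right]
  ring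

lemma sum_eq_of_translate_relation (δ γ κ₁ κ₂ : ℂ) (η w₁ w₂ : ℤ →₀ ℂ)
    (h : ∀ x : ℂ, trigPoly η x * trigPoly w₁ (x + δ - γ)
        = trigPoly w₂ x - trigPoly w₂ (x + δ) + κ₁ * trigPoly w₁ x + κ₂) :
    ∑ m ∈ w₁.support, η (-m) * (w₁ m * fourierMode m (δ - γ)) = κ₁ * w₁ 0 + κ₂ := by
  open AddMonoidAlgebra in
  set lhs : AddMonoidAlgebra ℂ ℤ := ofCoeff η * ofCoeff (translateCoeff (δ - γ) w₁)
  set rhs : AddMonoidAlgebra ℂ ℤ :=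
    ofCoeff w₂ - ofCoeff (translateCoeff δ w₂) + κ₁ • ofCoeff w₁ + algebraMap ℂ _ κ₂
  have heq : lhs = rhs := by
    refine AddMonoidAlgebra.coeff_injective (trigPoly_injective (funext fun x => ?_))
    simp only [← evalAt_apply, lhs, rhs, map_mul, map_add, map_sub, map_smul, AlgHom.commutes]
    simp only [evalAt_apply, trigPoly_translateCoeff, smul_eq_mul, Algebra.algebraMap_self,
      RingHom.id_apply]
    simpa only [add_sub_assoc] using h x
  have h0 := congrArg (fun f : AddMonoidAlgebra ℂ ℤ => f.coeff 0) heq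
  simpa [lhs, rhs, coeff_mul_apply_right, Finsupp.sum, fourierMode_zero_left] using h0

lemma fourierMode_sub (m : ℤ) (x y : ℂ) :
    fourierMode m (x - y) = Complex.exp (2 * (Real.pi : ℂ) * I * x) ^ m
      * Complex.exp (2 * (Real.pi : ℂ) * I * y) ^ (-m) := by
  rw [fourierMode_eq_zpow, mul_sub, Complex.exp_sub, div_zpow, zpow_neg, div_eq_mul_inv]

theorem stmt16 (δ γ κ₁ κ₂ : ℂ) (cη cw1 cw2 : ℤ →₀ ℂ)
    (p q : ℂ) (hpdef : p = Complex.exp (2 * (Real.pi : ℂ) * I * δ))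
    (hqdef : q = Complex.exp (2 * (Real.pi : ℂ) * I * γ))
    (hp : ∀ n : ℤ, n ≠ 0 → p ^ n ≠ 1)
    (hw1 : ∀ n : ℤ, n ≠ 0 → cw1 n = cη n / (1 - p ^ n))
    (hκ₁ : κ₁ = cη 0)
    (hrel : ∀ x : ℂ,
      trigPoly cη x * trigPoly cw1 (x + δ - γ)
        = trigPoly cw2 x - trigPoly cw2 (x + δ) + κ₁ * trigPoly cw1 x + κ₂) :
    κ₂ = ∑ n ∈ cη.support \ {0},
        (p ^ n * q ^ (-n) / (1 - p ^ n)) * (cη n * cη (-n)) := by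
  classical
  set f : ℤ → ℂ := fun m => cη (-m) * (cw1 m * fourierMode m (δ - γ))
  have hsum : ∑ m ∈ cw1.support, f m = κ₁ * cw1 0 + κ₂ :=
    sum_eq_of_translate_relation δ γ κ₁ κ₂ cη cw1 cw2 hrel
  have hzero : f 0 = κ₁ * cw1 0 := by simp [f, hκ₁, fourierMode_zero_left, mul_comm]
  have hsplit : ∑ m ∈ cw1.support, f m = f 0 + ∑ m ∈ cw1.support.erase 0, f m := by
    rw [← Finset.sum_insert_of_eq_zero_if_notMem (a := 0) fun h0 => by
        simp [f, Finsupp.notMem_support_iff.mp h0],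
      ← Finset.add_sum_erase _ _ (Finset.mem_insert_self 0 _), Finset.erase_insert_eq_erase]
  have hsupp : cw1.support.erase 0 = cη.support \ {0} := by
    ext n
    by_cases hn : n = 0
    · simp [hn]
    · simp [hn, hw1 n hn, sub_ne_zero.mpr (hp n hn).symm]
  calc κ₂ = ∑ m ∈ cw1.support.erase 0, f m := by linear_combination hsplit - hsum + hzero
    _ = _ := by
      rw [hsupp]
      refine Finset.sum_congr rfl fun n hn => ?_
      simp only [f]
      rw [hw1 n (Finset.notMem_singleton.mp (Finset.mem_sdiff.mp hn).2),
        fourierMode_sub, ← hpdef, ← hqdef]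
      ring
end
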